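/- arXiv:2110.10445 — 2 statements merged into one kernel-verified Lean document; each statement's English description precedes it below -/
import Mathlib

section
/- A set S ⊆ ℤ^n is a box of integers (i.e., S = {x ∈ ℤ^n : a_i ≤ x_i ≤ b_i for all i} for some a ∈ (ℤ ∪ {−∞})^n and b ∈ (ℤ ∪ {+∞})^n with a ≤ b) if and only if S is both L₂♮-convex and M₂♮-convex. -/
open Pointwise

/-- A nonempty set `S ⊆ ℤⁿ` is L-convex if it is closed under componentwise
max/min and under translation by integer multiples of the all-ones vector. -/
def IsLConvexSet {n : ℕ} (S : Set (Fin n → ℤ)) : Prop :=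
  S.Nonempty ∧
  (∀ x ∈ S, ∀ y ∈ S, x ⊔ y ∈ S ∧ x ⊓ y ∈ S) ∧
  (∀ x ∈ S, ∀ μ : ℤ, (x + fun _ => μ) ∈ S)

/-- A nonempty set `S ⊆ ℤⁿ` is L♮-convex if it is the intersection of an
L-convex set `T ⊆ ℤ^{n+1}` with the coordinate hyperplane "last coordinate 0". -/
def IsLNatConvexSet {n : ℕ} (S : Set (Fin n → ℤ)) : Prop :=
  S.Nonempty ∧
  ∃ T : Set (Fin (n + 1) → ℤ), IsLConvexSet T ∧
    S = {x : Fin n → ℤ | Fin.snoc x (0 : ℤ) ∈ T}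

/-- A set is L₂♮-convex if it is the Minkowski sum of two L♮-convex sets. -/
def IsL2NatConvexSet {n : ℕ} (S : Set (Fin n → ℤ)) : Prop :=
  ∃ S₁ S₂ : Set (Fin n → ℤ), IsLNatConvexSet S₁ ∧ IsLNatConvexSet S₂ ∧ S = S₁ + S₂

/-- The `i`-th unit vector of `ℤⁿ`. -/
def chi {n : ℕ} (i : Fin n) : Fin n → ℤ := fun l => if l = i then 1 else 0

/-- A nonempty set `S ⊆ ℤⁿ` is M♮-convex (exchange axiom). -/
def IsMNatConvexSet {n : ℕ} (S : Set (Fin n → ℤ)) : Prop :=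
  S.Nonempty ∧
  ∀ x ∈ S, ∀ y ∈ S, ∀ i : Fin n, y i < x i →
    ((x - chi i ∈ S ∧ y + chi i ∈ S) ∨
      ∃ j : Fin n, x j < y j ∧ x - chi i + chi j ∈ S ∧ y + chi i - chi j ∈ S)

/-- A set is M₂♮-convex if it is the intersection of two M♮-convex sets. -/
def IsM2NatConvexSet {n : ℕ} (S : Set (Fin n → ℤ)) : Prop :=
  ∃ S₁ S₂ : Set (Fin n → ℤ), IsMNatConvexSet S₁ ∧ IsMNatConvexSet S₂ ∧ S = S₁ ∩ S₂

/-- `S ⊆ ℤⁿ` is a box of integers: `S = {x : a_i ≤ x_i ≤ b_i}` for some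
`a ∈ (ℤ ∪ {-∞})ⁿ` and `b ∈ (ℤ ∪ {+∞})ⁿ` with `a ≤ b`, where both `a` and `b`
are encoded in `ℤ ∪ {±∞} = WithBot (WithTop ℤ)`. -/
def IsIntBox {n : ℕ} (S : Set (Fin n → ℤ)) : Prop :=
  ∃ a b : Fin n → WithBot (WithTop ℤ),
    (∀ i, a i ≠ ((⊤ : WithTop ℤ) : WithBot (WithTop ℤ))) ∧
    (∀ i, b i ≠ ⊥) ∧ (∀ i, a i ≤ b i) ∧
    S = {x : Fin n → ℤ | ∀ i,
      a i ≤ (((x i : ℤ) : WithTop ℤ) : WithBot (WithTop ℤ)) ∧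
      (((x i : ℤ) : WithTop ℤ) : WithBot (WithTop ℤ)) ≤ b i}

lemma lnat_lattice {n : ℕ} {A : Set (Fin n → ℤ)} (hA : IsLNatConvexSet A) :
    ∀ x ∈ A, ∀ y ∈ A, x ⊔ y ∈ A ∧ x ⊓ y ∈ A := by
  obtain ⟨-, T, hT, rfl⟩ := hA
  intro x hx y hy
  have h := hT.2.1 _ hx _ hy
  have e1 : (Fin.snoc x (0:ℤ) : Fin (n+1) → ℤ) ⊔ (Fin.snoc y (0:ℤ)) = Fin.snoc (x ⊔ y) (0:ℤ) := by
    funext j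
    refine Fin.lastCases ?_ (fun k => ?_) j <;> simp [Pi.sup_apply]
  have e2 : (Fin.snoc x (0:ℤ) : Fin (n+1) → ℤ) ⊓ (Fin.snoc y (0:ℤ)) = Fin.snoc (x ⊓ y) (0:ℤ) := by
    funext j
    refine Fin.lastCases ?_ (fun k => ?_) j <;> simp [Pi.inf_apply]
  exact ⟨by rw [Set.mem_setOf_eq, ← e1]; exact h.1, by rw [Set.mem_setOf_eq, ← e2]; exact h.2⟩

lemma mnat_box_step {n : ℕ} {P : Set (Fin n → ℤ)} (hP : IsMNatConvexSet P) :
    ∀ x ∈ P, ∀ y ∈ P, ∀ i : Fin n, x ≤ y → x i < y i →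
      x + chi i ∈ P ∧ y - chi i ∈ P := by
  intro x hx y hy i hle hlt
  rcases hP.2 y hy x hx i hlt with ⟨h1, h2⟩ | ⟨j, hj, -⟩
  · exact ⟨h2, h1⟩
  · exact absurd (hle j) (not_le.mpr hj)

lemma m2_box_step {n : ℕ} {S : Set (Fin n → ℤ)} (hM : IsM2NatConvexSet S) :
    ∀ x ∈ S, ∀ y ∈ S, ∀ i : Fin n, x ≤ y → x i < y i →
      x + chi i ∈ S ∧ y - chi i ∈ S := by
  obtain ⟨P, Q, hP, hQ, rfl⟩ := hM
  intro x hx y hy i hle hlt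
  obtain ⟨h1, h2⟩ := mnat_box_step hP x hx.1 y hy.1 i hle hlt
  obtain ⟨h3, h4⟩ := mnat_box_step hQ x hx.2 y hy.2 i hle hlt
  exact ⟨⟨h1, h3⟩, ⟨h2, h4⟩⟩

lemma l2_up {n : ℕ} {S : Set (Fin n → ℤ)} (hL : IsL2NatConvexSet S) :
    ∀ x ∈ S, ∀ y ∈ S, ∀ i : Fin n, x i < y i →
      ∃ z ∈ S, x ≤ z ∧ x i < z i := by
  obtain ⟨A, B, hA, hB, rfl⟩ := hL
  intro x hx y hy i hlt
  obtain ⟨a, ha, b, hb, hab⟩ := Set.mem_add.mp hx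
  obtain ⟨a', ha', b', hb', hab'⟩ := Set.mem_add.mp hy
  subst hab hab'
  rcases lt_or_ge (a i) (a' i) with h | h
  · refine ⟨(a ⊔ a') + b, Set.add_mem_add (lnat_lattice hA a ha a' ha').1 hb, ?_, ?_⟩
    · intro j; simp [Pi.add_apply, Pi.sup_apply]
    · simp only [Pi.add_apply, Pi.sup_apply]; omega
  · have h2 : b i < b' i := by have := hlt; simp only [Pi.add_apply] at this; omega
    refine ⟨a + (b ⊔ b'), Set.add_mem_add ha (lnat_lattice hB b hb b' hb').1, ?_, ?_⟩
    · intro j; simp [Pi.add_apply, Pi.sup_apply]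
    · simp only [Pi.add_apply, Pi.sup_apply]; omega

lemma l2_down {n : ℕ} {S : Set (Fin n → ℤ)} (hL : IsL2NatConvexSet S) :
    ∀ x ∈ S, ∀ y ∈ S, ∀ i : Fin n, x i < y i →
      ∃ w ∈ S, w ≤ y ∧ w i < y i := by
  obtain ⟨A, B, hA, hB, rfl⟩ := hL
  intro x hx y hy i hlt
  obtain ⟨a, ha, b, hb, hab⟩ := Set.mem_add.mp hx
  obtain ⟨a', ha', b', hb', hab'⟩ := Set.mem_add.mp hy
  subst hab hab'
  rcases lt_or_ge (a i) (a' i) with h | h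
  · refine ⟨(a ⊓ a') + b', Set.add_mem_add (lnat_lattice hA a ha a' ha').2 hb', ?_, ?_⟩
    · intro j; simp [Pi.add_apply, Pi.inf_apply]
    · simp only [Pi.add_apply, Pi.inf_apply]; omega
  · have h2 : b i < b' i := by have := hlt; simp only [Pi.add_apply] at this; omega
    refine ⟨a' + (b ⊓ b'), Set.add_mem_add ha' (lnat_lattice hB b hb b' hb').2, ?_, ?_⟩
    · intro j; simp [Pi.add_apply, Pi.inf_apply]
    · simp only [Pi.add_apply, Pi.inf_apply]; omega

lemma step_mem {n : ℕ} {S : Set (Fin n → ℤ)} (hL : IsL2NatConvexSet S)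
    (hM : IsM2NatConvexSet S) :
    ∀ x ∈ S, ∀ y ∈ S, ∀ i : Fin n, x i < y i →
      x + chi i ∈ S ∧ y - chi i ∈ S := by
  intro x hx y hy i hlt
  obtain ⟨z, hz, hxz, hzi⟩ := l2_up hL x hx y hy i hlt
  obtain ⟨w, hw, hwy, hwi⟩ := l2_down hL x hx y hy i hlt
  exact ⟨(m2_box_step hM x hx z hz i hxz hzi).1,
    (m2_box_step hM w hw y hy i hwy hwi).2⟩

lemma climb_up {n : ℕ} {S : Set (Fin n → ℤ)} (hL : IsL2NatConvexSet S)
    (hM : IsM2NatConvexSet S) :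
    ∀ k : ℕ, ∀ x ∈ S, ∀ i : Fin n, (∃ y ∈ S, x i + k ≤ y i) →
      Function.update x i (x i + k) ∈ S := by
  intro k
  induction k with
  | zero => intro x hx i _; simpa using hx
  | succ k ih =>
    intro x hx i ⟨y, hy, hle⟩
    have hu : Function.update x i (x i + k) ∈ S := ih x hx i ⟨y, hy, by push_cast at hle ⊢; omega⟩
    have hui : Function.update x i (x i + k) i = x i + k := Function.update_self ..
    have hlt : Function.update x i (x i + k) i < y i := by push_cast at hle; omega
    have hstep := (step_mem hL hM _ hu y hy i hlt).1
    have e : Function.update x i (x i + (k + 1 : ℕ)) =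
        Function.update x i (x i + k) + chi i := by
      funext j
      by_cases h : j = i
      · subst h; simp [chi, Pi.add_apply]; push_cast; ring
      · simp [chi, Pi.add_apply, Function.update_of_ne h, h]
    rw [e]; exact hstep

lemma climb_down {n : ℕ} {S : Set (Fin n → ℤ)} (hL : IsL2NatConvexSet S)
    (hM : IsM2NatConvexSet S) :
    ∀ k : ℕ, ∀ x ∈ S, ∀ i : Fin n, (∃ y ∈ S, y i ≤ x i - k) →
      Function.update x i (x i - k) ∈ S := by
  intro k
  induction k with
  | zero => intro x hx i _; simpa using hx
  | succ k ih =>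
    intro x hx i ⟨y, hy, hle⟩
    have hu : Function.update x i (x i - k) ∈ S := ih x hx i ⟨y, hy, by push_cast at hle ⊢; omega⟩
    have hui : Function.update x i (x i - k) i = x i - k := Function.update_self ..
    have hlt : y i < Function.update x i (x i - k) i := by push_cast at hle; omega
    have hstep := (step_mem hL hM y hy _ hu i hlt).2
    have e : Function.update x i (x i - (k + 1 : ℕ)) =
        Function.update x i (x i - k) - chi i := by
      funext j
      by_cases h : j = i
      · subst h; simp [chi, Pi.sub_apply]; push_cast; ring
      · simp [chi, Pi.sub_apply, Function.update_of_ne h, h]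
    rw [e]; exact hstep

lemma update_mem {n : ℕ} {S : Set (Fin n → ℤ)} (hL : IsL2NatConvexSet S)
    (hM : IsM2NatConvexSet S) :
    ∀ x ∈ S, ∀ y ∈ S, ∀ i : Fin n, ∀ c : ℤ,
      min (x i) (y i) ≤ c → c ≤ max (x i) (y i) → Function.update x i c ∈ S := by
  intro x hx y hy i c h1 h2
  rcases le_or_gt (x i) c with h | h
  · rcases le_or_gt c (x i) with h' | h'
    · have : c = x i := le_antisymm h' h
      subst this; simpa using hx
    · have hyc : c ≤ y i := by rcases max_cases (x i) (y i) with ⟨e, _⟩ | ⟨e, _⟩ <;> omega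
      have e : c = x i + ((c - x i).toNat : ℤ) := by omega
      rw [show Function.update x i c = Function.update x i (x i + ((c - x i).toNat : ℤ)) by rw [← e]]
      exact climb_up hL hM _ x hx i ⟨y, hy, by omega⟩
  · have hyc : y i ≤ c := by rcases min_cases (x i) (y i) with ⟨e, _⟩ | ⟨e, _⟩ <;> omega
    have e : c = x i - ((x i - c).toNat : ℤ) := by omega
    rw [show Function.update x i c = Function.update x i (x i - ((x i - c).toNat : ℤ)) by rw [← e]]
    exact climb_down hL hM _ x hx i ⟨y, hy, by omega⟩

lemma l2_nonempty {n : ℕ} {S : Set (Fin n → ℤ)} (hL : IsL2NatConvexSet S) : S.Nonempty := by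
  obtain ⟨A, B, hA, hB, rfl⟩ := hL
  obtain ⟨a, ha⟩ := hA.1
  obtain ⟨b, hb⟩ := hB.1
  exact ⟨a + b, Set.add_mem_add ha hb⟩

lemma prodMemBox {n : ℕ} {S : Set (Fin n → ℤ)} (hL : IsL2NatConvexSet S)
    (hM : IsM2NatConvexSet S) :
    ∀ x : Fin n → ℤ, (∀ i, ∃ s ∈ S, s i = x i) → x ∈ S := by
  intro x hx
  obtain ⟨s0, hs0⟩ := l2_nonempty hL
  have key : ∀ m : ℕ, m ≤ n → ∃ y ∈ S, ∀ i : Fin n, (i : ℕ) < m → y i = x i := by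
    intro m
    induction m with
    | zero => exact fun _ => ⟨s0, hs0, fun i hi => absurd hi (by omega)⟩
    | succ m ih =>
      intro hm
      obtain ⟨y, hy, hagree⟩ := ih (by omega)
      set i0 : Fin n := ⟨m, by omega⟩ with hi0
      obtain ⟨s, hs, hsv⟩ := hx i0
      refine ⟨Function.update y i0 (x i0),
        update_mem hL hM y hy s hs i0 (x i0) (by omega) (by omega), ?_⟩
      intro i hi
      by_cases h : i = i0
      · subst h; simp
      · rw [Function.update_of_ne h]
        exact hagree i (by
          have : (i : ℕ) ≠ m := fun e => h (Fin.ext (by simp [hi0, e]))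
          omega)
  obtain ⟨y, hy, hagree⟩ := key n le_rfl
  have : y = x := funext fun i => hagree i i.isLt
  rwa [← this]

lemma cast2_mono {c d : ℤ} (h : c ≤ d) :
    ((c : WithTop ℤ) : WithBot (WithTop ℤ)) ≤ ((d : WithTop ℤ) : WithBot (WithTop ℤ)) := by
  exact_mod_cast h

lemma cast2_le {c d : ℤ}
    (h : ((c : WithTop ℤ) : WithBot (WithTop ℤ)) ≤ ((d : WithTop ℤ) : WithBot (WithTop ℤ))) :
    c ≤ d := by exact_mod_cast h

lemma backward_box {n : ℕ} {S : Set (Fin n → ℤ)} (hL : IsL2NatConvexSet S)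
    (hM : IsM2NatConvexSet S) : IsIntBox S := by
  classical
  set I : Fin n → Set ℤ := fun i => (fun v => v i) '' S with hI
  have hmemI : ∀ v ∈ S, ∀ i, v i ∈ I i := fun v hv i => ⟨v, hv, rfl⟩
  obtain ⟨s0, hs0⟩ := l2_nonempty hL
  have hIne : ∀ i, (I i).Nonempty := fun i => ⟨s0 i, hmemI s0 hs0 i⟩
  refine ⟨fun i => if BddBelow (I i) then (((sInf (I i) : ℤ) : WithTop ℤ) : WithBot (WithTop ℤ)) else ⊥,
    fun i => if BddAbove (I i) then (((sSup (I i) : ℤ) : WithTop ℤ) : WithBot (WithTop ℤ))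
      else ((⊤ : WithTop ℤ) : WithBot (WithTop ℤ)), ?_, ?_, ?_, ?_⟩
  · intro i; dsimp only; split_ifs
    · simp
    · simp
  · intro i; dsimp only; split_ifs <;> simp
  · intro i
    have h1 : (if BddBelow (I i) then (((sInf (I i) : ℤ) : WithTop ℤ) : WithBot (WithTop ℤ)) else ⊥)
        ≤ ((s0 i : WithTop ℤ) : WithBot (WithTop ℤ)) := by
      split_ifs with h
      · exact cast2_mono (csInf_le h (hmemI s0 hs0 i))
      · exact bot_le
    have h2 : ((s0 i : WithTop ℤ) : WithBot (WithTop ℤ)) ≤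
        (if BddAbove (I i) then (((sSup (I i) : ℤ) : WithTop ℤ) : WithBot (WithTop ℤ))
          else ((⊤ : WithTop ℤ) : WithBot (WithTop ℤ))) := by
      split_ifs with h
      · exact cast2_mono (le_csSup h (hmemI s0 hs0 i))
      · exact WithBot.coe_le_coe.mpr le_top
    exact h1.trans h2
  · ext x
    simp only [Set.mem_setOf_eq]
    constructor
    · intro hxS i
      constructor
      · split_ifs with h
        · exact cast2_mono (csInf_le h (hmemI x hxS i))
        · exact bot_le
      · split_ifs with h
        · exact cast2_mono (le_csSup h (hmemI x hxS i))
        · exact WithBot.coe_le_coe.mpr le_top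
    · intro hx
      refine prodMemBox hL hM x (fun i => ?_)
      obtain ⟨h1, h2⟩ := hx i
      -- lower witness
      have hwlow : ∃ p ∈ I i, p ≤ x i := by
        by_cases h : BddBelow (I i)
        · refine ⟨sInf (I i), Int.csInf_mem (hIne i) h, ?_⟩
          rw [if_pos h] at h1
          exact cast2_le h1
        · have hx' : ¬ x i ∈ lowerBounds (I i) := fun hmem => h ⟨_, hmem⟩
          rw [mem_lowerBounds] at hx'
          push_neg at hx'
          obtain ⟨p, hp, hplt⟩ := hx'
          exact ⟨p, hp, le_of_lt hplt⟩
      have hwhigh : ∃ q ∈ I i, x i ≤ q := by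
        by_cases h : BddAbove (I i)
        · refine ⟨sSup (I i), Int.csSup_mem (hIne i) h, ?_⟩
          rw [if_pos h] at h2
          exact cast2_le h2
        · have hx' : ¬ x i ∈ upperBounds (I i) := fun hmem => h ⟨_, hmem⟩
          rw [mem_upperBounds] at hx'
          push_neg at hx'
          obtain ⟨q, hq, hqlt⟩ := hx'
          exact ⟨q, hq, le_of_lt hqlt⟩
      obtain ⟨p, ⟨s, hs, hsv⟩, hple⟩ := hwlow
      obtain ⟨q, ⟨t, ht, htv⟩, hqle⟩ := hwhigh
      rw [← hsv] at hple
      rw [← htv] at hqle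
      refine ⟨Function.update s i (x i),
        update_mem hL hM s hs t ht i (x i) (min_le_of_left_le hple)
          (le_max_of_le_right hqle), by simp⟩

section Forward
variable {n : ℕ} {a b : Fin n → WithBot (WithTop ℤ)}

lemma box_pick {a b : WithBot (WithTop ℤ)} (ha : a ≠ ((⊤ : WithTop ℤ) : WithBot (WithTop ℤ)))
    (hb : b ≠ ⊥) (hab : a ≤ b) : ∃ c : ℤ, a ≤ ((c : WithTop ℤ) : WithBot (WithTop ℤ)) ∧
      ((c : WithTop ℤ) : WithBot (WithTop ℤ)) ≤ b := by
  induction a using WithBot.recBotCoe with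
  | bot =>
    induction b using WithBot.recBotCoe with
    | bot => exact absurd rfl hb
    | coe u =>
      induction u using WithTop.recTopCoe with
      | top => exact ⟨0, bot_le, WithBot.coe_le_coe.mpr le_top⟩
      | coe M => exact ⟨M, bot_le, le_rfl⟩
  | coe t =>
    induction t using WithTop.recTopCoe with
    | top => exact absurd rfl ha
    | coe m => exact ⟨m, le_rfl, hab⟩

lemma box_nonempty (ha : ∀ i, a i ≠ ((⊤ : WithTop ℤ) : WithBot (WithTop ℤ)))
    (hb : ∀ i, b i ≠ ⊥) (hab : ∀ i, a i ≤ b i) :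
    {x : Fin n → ℤ | ∀ i,
      a i ≤ (((x i : ℤ) : WithTop ℤ) : WithBot (WithTop ℤ)) ∧
      (((x i : ℤ) : WithTop ℤ) : WithBot (WithTop ℤ)) ≤ b i}.Nonempty := by
  choose c hc1 hc2 using fun i => box_pick (ha i) (hb i) (hab i)
  exact ⟨c, fun i => ⟨hc1 i, hc2 i⟩⟩

lemma between_bounds {A B : WithBot (WithTop ℤ)} {p q c : ℤ}
    (h1 : A ≤ ((p : WithTop ℤ) : WithBot (WithTop ℤ)) ∧ ((p : WithTop ℤ) : WithBot (WithTop ℤ)) ≤ B)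
    (h2 : A ≤ ((q : WithTop ℤ) : WithBot (WithTop ℤ)) ∧ ((q : WithTop ℤ) : WithBot (WithTop ℤ)) ≤ B)
    (hc1 : min p q ≤ c) (hc2 : c ≤ max p q) :
    A ≤ ((c : WithTop ℤ) : WithBot (WithTop ℤ)) ∧ ((c : WithTop ℤ) : WithBot (WithTop ℤ)) ≤ B := by
  constructor
  · have : A ≤ ((min p q : ℤ) : WithTop ℤ) := by
      rcases min_cases p q with ⟨e, _⟩ | ⟨e, _⟩ <;> rw [e]
      exacts [h1.1, h2.1]
    exact this.trans (cast2_mono hc1)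
  · have : (((max p q : ℤ) : WithTop ℤ) : WithBot (WithTop ℤ)) ≤ B := by
      rcases max_cases p q with ⟨e, _⟩ | ⟨e, _⟩ <;> rw [e]
      exacts [h1.2, h2.2]
    exact (cast2_mono hc2).trans this

lemma box_lnat (ha : ∀ i, a i ≠ ((⊤ : WithTop ℤ) : WithBot (WithTop ℤ)))
    (hb : ∀ i, b i ≠ ⊥) (hab : ∀ i, a i ≤ b i) :
    IsLNatConvexSet {x : Fin n → ℤ | ∀ i,
      a i ≤ (((x i : ℤ) : WithTop ℤ) : WithBot (WithTop ℤ)) ∧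
      (((x i : ℤ) : WithTop ℤ) : WithBot (WithTop ℤ)) ≤ b i} := by
  obtain ⟨x0, hx0⟩ := box_nonempty ha hb hab
  refine ⟨⟨x0, hx0⟩,
    {z : Fin (n+1) → ℤ | ∀ i : Fin n,
      a i ≤ (((z i.castSucc - z (Fin.last n) : ℤ) : WithTop ℤ) : WithBot (WithTop ℤ)) ∧
      (((z i.castSucc - z (Fin.last n) : ℤ) : WithTop ℤ) : WithBot (WithTop ℤ)) ≤ b i},
    ⟨⟨Fin.snoc x0 0, ?_⟩, ?_, ?_⟩, ?_⟩
  · intro i; simpa using hx0 i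
  · intro z hz w hw
    constructor
    · intro i
      refine between_bounds (hz i) (hw i) ?_ ?_ <;>
        · simp only [Pi.sup_apply]
          simp only [max_def, min_def]; split_ifs <;> omega
    · intro i
      refine between_bounds (hz i) (hw i) ?_ ?_ <;>
        · simp only [Pi.inf_apply]
          simp only [max_def, min_def]; split_ifs <;> omega
  · intro z hz μ i
    simpa only [Pi.add_apply, add_sub_add_right_eq_sub] using hz i
  · ext x
    simp only [Set.mem_setOf_eq, Fin.snoc_castSucc, Fin.snoc_last, sub_zero]

lemma box_mnat (ha : ∀ i, a i ≠ ((⊤ : WithTop ℤ) : WithBot (WithTop ℤ)))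
    (hb : ∀ i, b i ≠ ⊥) (hab : ∀ i, a i ≤ b i) :
    IsMNatConvexSet {x : Fin n → ℤ | ∀ i,
      a i ≤ (((x i : ℤ) : WithTop ℤ) : WithBot (WithTop ℤ)) ∧
      (((x i : ℤ) : WithTop ℤ) : WithBot (WithTop ℤ)) ≤ b i} := by
  refine ⟨box_nonempty ha hb hab, ?_⟩
  intro x hx y hy i hlt
  left
  constructor
  · intro j
    by_cases h : j = i
    · subst h
      have e : (x - chi j) j = x j - 1 := by simp [chi, Pi.sub_apply]
      rw [e]
      exact ⟨(hy j).1.trans (cast2_mono (by omega)), (cast2_mono (by omega)).trans (hx j).2⟩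
    · have e : (x - chi i) j = x j := by simp [chi, Pi.sub_apply, h]
      rw [e]; exact hx j
  · intro j
    by_cases h : j = i
    · subst h
      have e : (y + chi j) j = y j + 1 := by simp [chi, Pi.add_apply]
      rw [e]
      exact ⟨(hy j).1.trans (cast2_mono (by omega)), (cast2_mono (by omega)).trans (hx j).2⟩
    · have e : (y + chi i) j = y j := by simp [chi, Pi.add_apply, h]
      rw [e]; exact hy j

end Forward

/-- A set `S ⊆ ℤⁿ` is a box of integers iff it is both L₂♮-convex and
M₂♮-convex. -/
theorem intBox_iff_L2nat_and_M2nat {n : ℕ} (S : Set (Fin n → ℤ)) :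
    IsIntBox S ↔ IsL2NatConvexSet S ∧ IsM2NatConvexSet S := by
  constructor
  · rintro ⟨a, b, ha, hb, hab, rfl⟩
    constructor
    · refine ⟨_, {x : Fin n → ℤ | ∀ i,
        (fun _ : Fin n => (((0 : ℤ) : WithTop ℤ) : WithBot (WithTop ℤ))) i ≤
          (((x i : ℤ) : WithTop ℤ) : WithBot (WithTop ℤ)) ∧
        (((x i : ℤ) : WithTop ℤ) : WithBot (WithTop ℤ)) ≤
          (fun _ : Fin n => (((0 : ℤ) : WithTop ℤ) : WithBot (WithTop ℤ))) i},
        box_lnat ha hb hab,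
        box_lnat (fun _ => by intro h; exact WithTop.coe_ne_top (WithBot.coe_inj.mp h)) (fun _ => by simp) (fun _ => le_rfl), ?_⟩
      have hz : ∀ z : Fin n → ℤ, (∀ i : Fin n,
          (((0 : ℤ) : WithTop ℤ) : WithBot (WithTop ℤ)) ≤
            (((z i : ℤ) : WithTop ℤ) : WithBot (WithTop ℤ)) ∧
          (((z i : ℤ) : WithTop ℤ) : WithBot (WithTop ℤ)) ≤
            (((0 : ℤ) : WithTop ℤ) : WithBot (WithTop ℤ))) ↔ z = 0 := by
        intro z
        constructor
        · intro h
          funext i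
          have h1 := cast2_le (h i).1
          have h2 := cast2_le (h i).2
          simpa using le_antisymm h2 h1
        · rintro rfl i; simp
      ext x
      constructor
      · intro hx
        refine Set.mem_add.mpr ⟨x, hx, 0, ?_, add_zero x⟩
        intro i; simp
      · intro hx
        obtain ⟨s, hs, z, hzmem, hsz⟩ := Set.mem_add.mp hx
        have : z = 0 := (hz z).mp hzmem
        subst this
        rw [add_zero] at hsz
        rwa [← hsz]
    · exact ⟨_, _, box_mnat ha hb hab, box_mnat ha hb hab, (Set.inter_self _).symm⟩
  · rintro ⟨hL, hM⟩
    exact backward_box hL hM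
end

section
/- A nonempty set P ⊆ ℝ^n is a multimodular polyhedron if and only if it can be represented as P = {x ∈ ℝ^n : a_I ≤ x(I) ≤ b_I for every consecutive subset I of N = {1,…,n}} for some values a_I ∈ ℝ ∪ {−∞} and b_I ∈ ℝ ∪ {+∞} indexed by the consecutive subsets I of N. -/
/-- A polyhedron in `ℝⁿ` is the solution set of a finite system of linear
inequalities. -/
def IsPolyhedron {n : ℕ} (P : Set (Fin n → ℝ)) : Prop :=
  ∃ (m : ℕ) (A : Fin m → Fin n → ℝ) (b : Fin m → ℝ),
    P = {x | ∀ i, ∑ j, A i j * x j ≤ b i}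

/-- A nonempty polyhedron `P ⊆ ℝⁿ` is L-convex if it is closed under
componentwise max/min and under translation by real multiples of `𝟏`. -/
def IsLConvexPoly {n : ℕ} (P : Set (Fin n → ℝ)) : Prop :=
  IsPolyhedron P ∧ P.Nonempty ∧
  (∀ x ∈ P, ∀ y ∈ P, x ⊔ y ∈ P ∧ x ⊓ y ∈ P) ∧
  (∀ x ∈ P, ∀ μ : ℝ, (x + fun _ => μ) ∈ P)

/-- A polyhedron `P ⊆ ℝⁿ` is L♮-convex if it is the intersection of an
L-convex polyhedron `Q ⊆ ℝ^{n+1}` with the hyperplane "last coordinate 0". -/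
def IsLNatConvexPoly {n : ℕ} (P : Set (Fin n → ℝ)) : Prop :=
  IsPolyhedron P ∧
  ∃ Q : Set (Fin (n + 1) → ℝ), IsLConvexPoly Q ∧
    P = {x : Fin n → ℝ | Fin.snoc x (0 : ℝ) ∈ Q}

/-- The bidiagonal matrix `D` with `d_{ii} = 1` and `d_{i+1,i} = -1`. -/
def matD (n : ℕ) : Matrix (Fin n) (Fin n) ℝ :=
  Matrix.of fun i j => if i = j then 1 else if (i : ℕ) = (j : ℕ) + 1 then -1 else 0

/-- A polyhedron is multimodular if it is the image of an L♮-convex polyhedron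
under the matrix `D`. -/
def IsMultimodularPoly {n : ℕ} (P : Set (Fin n → ℝ)) : Prop :=
  ∃ Q : Set (Fin n → ℝ), IsLNatConvexPoly Q ∧ P = (matD n).mulVec '' Q

/-- A subset `I ⊆ N` is consecutive if `I = {k, k+1, …, l}` for some `k ≤ l`. -/
def IsConsecutive {n : ℕ} (I : Finset (Fin n)) : Prop :=
  ∃ k l : Fin n, k ≤ l ∧ I = Finset.Icc k l


/-!
Padding the partial sums `s = D⁻¹ x` with a zero coordinate `s₋₁ = 0` turns interval sums into
coordinate differences, `x(k..l) = s_l - s_{k-1}`, and every difference of two coordinates of the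
padded vector is `0` or `± x(I)` for a consecutive `I`. So `P` is multimodular iff its padded
partial sums range over an L-convex polyhedron, and L-convex polyhedra are the nonempty sets cut
out by bounds on coordinate differences: such sets are closed under `⊔`, `⊓` and shifts along `𝟏`;
conversely, if the coordinate differences of `z` obey every bound valid on an L-convex `S`, a
`sup` of `inf`s of shifted points of `S` lies within `ε` of `z`, so `z` is in the closed set `S`.
-/

section Polyhedron

variable {n : ℕ}

lemma isPolyhedron_of_finite {ι : Type*} [Finite ι] (A : ι → Fin n → ℝ) (b : ι → ℝ) :
    IsPolyhedron {x : Fin n → ℝ | ∀ i, ∑ j, A i j * x j ≤ b i} := by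
  obtain ⟨m, ⟨e⟩⟩ := Finite.exists_equiv_fin ι
  refine ⟨m, A ∘ e.symm, b ∘ e.symm, ?_⟩
  ext x
  simp only [Set.mem_ofPred_eq, e.forall_congr_left, Function.comp_apply]

lemma isPolyhedron_univ : IsPolyhedron (Set.univ : Set (Fin n → ℝ)) := by
  simpa using isPolyhedron_of_finite (ι := Empty) (n := n) (fun _ _ => 0) fun _ => 0

lemma isPolyhedron_setOf_le (f : (Fin n → ℝ) →ₗ[ℝ] ℝ) (d : ℝ) :
    IsPolyhedron {x | f x ≤ d} := by
  convert isPolyhedron_of_finite (ι := Unit) (fun _ j => f (Pi.single j 1)) fun _ => d using 1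
  ext x
  conv_lhs => rw [pi_eq_sum_univ' x]
  simp [mul_comm]

lemma isPolyhedron_setOf_coe_le (f : (Fin n → ℝ) →ₗ[ℝ] ℝ) (d : WithTop ℝ) :
    IsPolyhedron {x | ((f x : ℝ) : WithTop ℝ) ≤ d} := by
  induction d using WithTop.recTopCoe with
  | top => simpa using isPolyhedron_univ
  | coe d => simpa using isPolyhedron_setOf_le f d

lemma isPolyhedron_setOf_le_coe (f : (Fin n → ℝ) →ₗ[ℝ] ℝ) (d : WithBot ℝ) :
    IsPolyhedron {x | d ≤ ((f x : ℝ) : WithBot ℝ)} := by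
  induction d using WithBot.recBotCoe with
  | bot => simpa using isPolyhedron_univ
  | coe d => simpa using isPolyhedron_setOf_le (-f) (-d)

lemma IsPolyhedron.iInter {ι : Type*} [Finite ι] {P : ι → Set (Fin n → ℝ)}
    (hP : ∀ i, IsPolyhedron (P i)) : IsPolyhedron (⋂ i, P i) := by
  choose m A b hPAb using hP
  convert isPolyhedron_of_finite (ι := Σ i, Fin (m i)) (fun s => A s.1 s.2) fun s => b s.1 s.2
  ext x
  simp [hPAb, Sigma.forall]

lemma IsPolyhedron.inter {P Q : Set (Fin n → ℝ)} (hP : IsPolyhedron P) (hQ : IsPolyhedron Q) :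
    IsPolyhedron (P ∩ Q) :=
  Set.inter_eq_iInter ▸ IsPolyhedron.iInter (Bool.forall_bool.2 ⟨hQ, hP⟩)

lemma IsPolyhedron.isClosed {P : Set (Fin n → ℝ)} (hP : IsPolyhedron P) : IsClosed P := by
  obtain ⟨m, A, b, rfl⟩ := hP
  simp only [Set.ofPred_forall]
  exact isClosed_iInter fun i => isClosed_le (by fun_prop) continuous_const

lemma IsPolyhedron.preimage_snoc_zero {Q : Set (Fin (n + 1) → ℝ)} (hQ : IsPolyhedron Q) :
    IsPolyhedron {y : Fin n → ℝ | Fin.snoc y (0 : ℝ) ∈ Q} := by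
  obtain ⟨m, A, b, rfl⟩ := hQ
  refine ⟨m, fun i j => A i j.castSucc, b, ?_⟩
  ext y
  simp [Fin.sum_univ_castSucc]

end Polyhedron

section DiffBounded

lemma max_sub_max_mem_uIcc {α : Type*} [AddCommGroup α] [LinearOrder α] [IsOrderedAddMonoid α]
    (a b c d : α) : max a b - max c d ∈ Set.uIcc (a - c) (b - d) := by
  rw [Set.mem_uIcc]
  grind

lemma min_sub_min_mem_uIcc {α : Type*} [AddCommGroup α] [LinearOrder α] [IsOrderedAddMonoid α]
    (a b c d : α) : min a b - min c d ∈ Set.uIcc (a - c) (b - d) := by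
  rw [Set.mem_uIcc]
  grind

variable {m : ℕ} {ι : Type*} (p q : ι → Fin m) (lo : ι → WithBot ℝ) (hi : ι → WithTop ℝ)

def diffBoundedSet : Set (Fin m → ℝ) :=
  {w | ∀ c, lo c ≤ ((w (p c) - w (q c) : ℝ) : WithBot ℝ) ∧
    ((w (p c) - w (q c) : ℝ) : WithTop ℝ) ≤ hi c}

lemma isPolyhedron_diffBoundedSet [Finite ι] : IsPolyhedron (diffBoundedSet p q lo hi) := by
  let δ c : (Fin m → ℝ) →ₗ[ℝ] ℝ :=
    LinearMap.proj (R := ℝ) (φ := fun _ => ℝ) (p c) - LinearMap.proj (q c)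
  have hδ : diffBoundedSet p q lo hi = ⋂ c,
      {w | lo c ≤ ((δ c w : ℝ) : WithBot ℝ)} ∩ {w | ((δ c w : ℝ) : WithTop ℝ) ≤ hi c} := by
    ext w
    simp [diffBoundedSet, δ]
  rw [hδ]
  exact .iInter fun c => (isPolyhedron_setOf_le_coe _ _).inter (isPolyhedron_setOf_coe_le _ _)

lemma ordConnected_setOf_bounds (a : WithBot ℝ) (b : WithTop ℝ) :
    Set.OrdConnected {r : ℝ | a ≤ (r : WithBot ℝ) ∧ (r : WithTop ℝ) ≤ b} :=
  ⟨fun _ hr _ hs _ ht =>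
    ⟨hr.1.trans (WithBot.coe_le_coe.2 ht.1), (WithTop.coe_le_coe.2 ht.2).trans hs.2⟩⟩

variable {p q lo hi}

lemma sup_mem_diffBoundedSet {w v : Fin m → ℝ} (hw : w ∈ diffBoundedSet p q lo hi)
    (hv : v ∈ diffBoundedSet p q lo hi) : w ⊔ v ∈ diffBoundedSet p q lo hi := fun c =>
  (ordConnected_setOf_bounds (lo c) (hi c)).uIcc_subset (hw c) (hv c)
    (max_sub_max_mem_uIcc _ _ _ _)

lemma inf_mem_diffBoundedSet {w v : Fin m → ℝ} (hw : w ∈ diffBoundedSet p q lo hi)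
    (hv : v ∈ diffBoundedSet p q lo hi) : w ⊓ v ∈ diffBoundedSet p q lo hi := fun c =>
  (ordConnected_setOf_bounds (lo c) (hi c)).uIcc_subset (hw c) (hv c)
    (min_sub_min_mem_uIcc _ _ _ _)

lemma add_const_mem_diffBoundedSet {w : Fin m → ℝ} (hw : w ∈ diffBoundedSet p q lo hi) (μ : ℝ) :
    (w + fun _ => μ) ∈ diffBoundedSet p q lo hi := fun c => by
  simpa using hw c

lemma isLConvexPoly_diffBoundedSet [Finite ι] (hne : (diffBoundedSet p q lo hi).Nonempty) :
    IsLConvexPoly (diffBoundedSet p q lo hi) :=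
  ⟨isPolyhedron_diffBoundedSet p q lo hi, hne,
    fun _ hw _ hv => ⟨sup_mem_diffBoundedSet hw hv, inf_mem_diffBoundedSet hw hv⟩,
    fun _ hw => add_const_mem_diffBoundedSet hw⟩

end DiffBounded

theorem IsLConvexPoly.mem_of_forall_sub_le {m : ℕ} {S : Set (Fin m → ℝ)} (hS : IsLConvexPoly S)
    {z : Fin m → ℝ} (hz : ∀ i j r, (∀ w ∈ S, w i - w j ≤ r) → z i - z j ≤ r) : z ∈ S := by
  obtain ⟨hpoly, ⟨v, hv⟩, hlat, hshift⟩ := hS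
  rcases isEmpty_or_nonempty (Fin m) with hm | hm
  · exact Subsingleton.elim v z ▸ hv
  refine hpoly.isClosed.closure_subset (Metric.mem_closure_iff.2 fun ε hε => ?_)
  have hy : ∀ i j, ∃ y ∈ S, y i = z i ∧ y j < z j + ε := by
    intro i j
    by_contra! h
    have hsub : ∀ w ∈ S, w i - w j ≤ z i - z j - ε := fun w hw => by
      have := h _ (hshift w hw (z i - w i)) (by simp)
      simp only [Pi.add_apply] at this
      linarith
    linarith [hz i j _ hsub]
  choose y hyS hyi hyj using hy
  -- `Z i` is pinned to `z i` at `i` and below `z + ε` elsewhere; their `sup` is squeezed onto `z`.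
  let Z i := Finset.univ.inf' Finset.univ_nonempty (y i)
  let W := Finset.univ.sup' Finset.univ_nonempty Z
  have hZS i : Z i ∈ S :=
    Finset.inf'_mem S (fun a ha b hb => (hlat a ha b hb).2) _ _ _ fun j _ => hyS i j
  have hWS : W ∈ S := Finset.sup'_mem S (fun a ha b hb => (hlat a ha b hb).1) _ _ _ fun i _ => hZS i
  refine ⟨W, hWS, (dist_pi_lt_iff hε).2 fun j => ?_⟩
  have hlow : z j ≤ W j := by
    simp only [W, Z, Finset.sup'_apply, Finset.inf'_apply]
    exact Finset.le_sup'_of_le _ (Finset.mem_univ j) (Finset.le_inf' _ _ fun i _ => (hyi j i).ge)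
  have hup : W j < z j + ε := by
    simp only [W, Z, Finset.sup'_apply, Finset.inf'_apply, Finset.sup'_lt_iff]
    exact fun i _ => (Finset.inf'_le _ (Finset.mem_univ j)).trans_lt (hyj i j)
  rw [Real.dist_eq, abs_sub_lt_iff]
  constructor <;> linarith

section Multimodular

variable {n : ℕ}

def matL (n : ℕ) : Matrix (Fin n) (Fin n) ℝ := Matrix.of fun i j => if j ≤ i then 1 else 0

lemma matD_mul_matL : matD n * matL n = 1 := by
  -- Row `i` of `matD` has `1` at `i` and `-1` at `i - 1`: the entry is `[k ≤ i] - [k ≤ i - 1]`.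
  ext i k
  rw [Matrix.mul_apply, Matrix.one_apply]
  by_cases hi : (i : ℕ) = 0
  · rw [Finset.sum_eq_single_of_mem i (Finset.mem_univ _) fun j _ hj => ?_]
    · simp only [matD, matL, Matrix.of_apply, Fin.le_def, Fin.ext_iff]
      split_ifs <;> (try simp) <;> omega
    · simp only [matD, matL, Matrix.of_apply, ne_eq, Fin.ext_iff] at hj ⊢
      split_ifs <;> (try simp) <;> omega
  · set i' : Fin n := ⟨i - 1, by omega⟩
    rw [Finset.sum_eq_add_of_mem i i' (Finset.mem_univ _) (Finset.mem_univ _)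
      (by simp [i', Fin.ext_iff]; omega) fun j _ hj => ?_]
    · simp only [matD, matL, Matrix.of_apply, Fin.le_def, Fin.ext_iff, i']
      split_ifs <;> (try norm_num) <;> omega
    · simp only [matD, matL, Matrix.of_apply, ne_eq, Fin.ext_iff, i'] at hj ⊢
      split_ifs <;> (try simp) <;> omega

def prefixSum (x : Fin n → ℝ) : Fin n → ℝ := fun l => ∑ i ∈ Finset.Iic l, x i

lemma matL_mulVec (x : Fin n → ℝ) : (matL n).mulVec x = prefixSum x := by
  ext l
  simp only [Matrix.mulVec, dotProduct, matL, prefixSum, Matrix.of_apply, ite_mul, one_mul,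
    zero_mul]
  rw [← Finset.sum_filter]
  congr 1
  ext i
  simp

lemma mem_image_matD_mulVec_iff {Q : Set (Fin n → ℝ)} {x : Fin n → ℝ} :
    x ∈ (matD n).mulVec '' Q ↔ prefixSum x ∈ Q := by
  have hLD : matL n * matD n = 1 := mul_eq_one_comm.1 matD_mul_matL
  constructor
  · rintro ⟨y, hy, rfl⟩
    rwa [← matL_mulVec, Matrix.mulVec_mulVec, hLD, Matrix.one_mulVec]
  · exact fun hx => ⟨_, hx, by rw [← matL_mulVec, Matrix.mulVec_mulVec, matD_mul_matL,
      Matrix.one_mulVec]⟩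

/-- The coordinate of `Fin (n + 1)` preceding `k`, where the last coordinate stands for `-1`. -/
def prevIdx (k : Fin n) : Fin (n + 1) :=
  if (k : ℕ) = 0 then Fin.last n else ⟨k - 1, by omega⟩

def liftSum (x : Fin n → ℝ) : Fin (n + 1) → ℝ := Fin.snoc (prefixSum x) 0

lemma liftSum_prevIdx (x : Fin n → ℝ) (k : Fin n) :
    liftSum x (prevIdx k) = ∑ i ∈ Finset.Iio k, x i := by
  unfold liftSum prevIdx
  split_ifs with hk
  · have : Finset.Iio k = ∅ := by ext i; simp; omega
    simp [this]
  · rw [show (⟨k - 1, _⟩ : Fin (n + 1)) = Fin.castSucc ⟨k - 1, by omega⟩ from rfl,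
      Fin.snoc_castSucc, prefixSum]
    congr 1
    ext i
    simp only [Finset.mem_Iic, Finset.mem_Iio, Fin.le_iff_val_le_val, Fin.lt_def]
    omega

lemma liftSum_sub_liftSum (x : Fin n → ℝ) {k l : Fin n} (hkl : k ≤ l) :
    liftSum x l.castSucc - liftSum x (prevIdx k) = ∑ i ∈ Finset.Icc k l, x i := by
  have hsub : Finset.Iio k ⊆ Finset.Iic l :=
    Finset.Iio_subset_Iic_self.trans (Finset.Iic_subset_Iic.2 hkl)
  rw [liftSum_prevIdx, liftSum, Fin.snoc_castSucc, prefixSum, ← Finset.sum_sdiff_eq_sub hsub]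
  congr 1
  ext i
  simp
  omega

lemma exists_prevIdx_of_lt {p q : Fin (n + 1)} (hpq : p < q) :
    ∃ k l : Fin n, k ≤ l ∧ (p = l.castSucc ∧ q = prevIdx k ∨ q = l.castSucc ∧ p = prevIdx k) := by
  obtain ⟨i, rfl⟩ := Fin.exists_castSucc_eq.2 (Fin.ne_last_of_lt hpq)
  induction q using Fin.lastCases with
  | last =>
    exact ⟨⟨0, by omega⟩, i, Fin.le_iff_val_le_val.2 (Nat.zero_le _),
      .inl ⟨rfl, by simp [prevIdx]⟩⟩
  | cast j =>
    rw [Fin.castSucc_lt_castSucc_iff, Fin.lt_def] at hpq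
    refine ⟨⟨i + 1, by omega⟩, j, Fin.le_iff_val_le_val.2 hpq, .inr ⟨rfl, ?_⟩⟩
    simp [prevIdx, Fin.ext_iff]

lemma eq_or_exists_prevIdx (p q : Fin (n + 1)) : p = q ∨
    ∃ k l : Fin n, k ≤ l ∧ (p = l.castSucc ∧ q = prevIdx k ∨ q = l.castSucc ∧ p = prevIdx k) := by
  rcases lt_trichotomy p q with hpq | rfl | hqp
  · exact .inr (exists_prevIdx_of_lt hpq)
  · exact .inl rfl
  · obtain ⟨k, l, hkl, h⟩ := exists_prevIdx_of_lt hqp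
    exact .inr ⟨k, l, hkl, h.symm⟩

lemma isMultimodularPoly_iff {P : Set (Fin n → ℝ)} :
    IsMultimodularPoly P ↔ ∃ S, IsLConvexPoly S ∧ P = {x | liftSum x ∈ S} := by
  constructor
  · rintro ⟨Q, ⟨-, S, hS, rfl⟩, rfl⟩
    exact ⟨S, hS, Set.ext fun x => mem_image_matD_mulVec_iff⟩
  · rintro ⟨S, hS, rfl⟩
    refine ⟨{y | Fin.snoc y 0 ∈ S}, ⟨hS.1.preimage_snoc_zero, S, hS, rfl⟩, ?_⟩
    ext x
    rw [mem_image_matD_mulVec_iff]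
    rfl

lemma liftSum_mem_of_forall_sum_Icc {S : Set (Fin (n + 1) → ℝ)} (hS : IsLConvexPoly S)
    {z : Fin n → ℝ}
    (hle : ∀ k l : Fin n, k ≤ l → ∀ r : ℝ,
      (∀ x, liftSum x ∈ S → ∑ i ∈ Finset.Icc k l, x i ≤ r) → ∑ i ∈ Finset.Icc k l, z i ≤ r)
    (hge : ∀ k l : Fin n, k ≤ l → ∀ r : ℝ,
      (∀ x, liftSum x ∈ S → r ≤ ∑ i ∈ Finset.Icc k l, x i) → r ≤ ∑ i ∈ Finset.Icc k l, z i) :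
    liftSum z ∈ S := by
  refine hS.mem_of_forall_sub_le fun p q r hr => ?_
  rcases eq_or_exists_prevIdx p q with rfl | ⟨k, l, hkl, ⟨rfl, rfl⟩ | ⟨rfl, rfl⟩⟩
  · obtain ⟨w, hw⟩ := hS.2.1
    simpa using hr w hw
  · rw [liftSum_sub_liftSum z hkl]
    exact hle k l hkl r fun x hx => liftSum_sub_liftSum x hkl ▸ hr _ hx
  · rw [← neg_sub, liftSum_sub_liftSum z hkl, neg_le]
    refine hge k l hkl (-r) fun x hx => ?_
    rw [neg_le, ← liftSum_sub_liftSum x hkl, neg_sub]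
    exact hr _ hx

def liftedBoundSet (a : Finset (Fin n) → WithBot ℝ) (b : Finset (Fin n) → WithTop ℝ) :
    Set (Fin (n + 1) → ℝ) :=
  diffBoundedSet (fun c : {kl : Fin n × Fin n // kl.1 ≤ kl.2} => c.1.2.castSucc)
    (fun c => prevIdx c.1.1) (fun c => a (Finset.Icc c.1.1 c.1.2))
    (fun c => b (Finset.Icc c.1.1 c.1.2))

lemma liftSum_mem_liftedBoundSet_iff {a : Finset (Fin n) → WithBot ℝ}
    {b : Finset (Fin n) → WithTop ℝ} {x : Fin n → ℝ} :
    liftSum x ∈ liftedBoundSet a b ↔ ∀ I : Finset (Fin n), IsConsecutive I →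
      a I ≤ ((∑ i ∈ I, x i : ℝ) : WithBot ℝ) ∧ ((∑ i ∈ I, x i : ℝ) : WithTop ℝ) ≤ b I := by
  simp only [liftedBoundSet, diffBoundedSet, Set.mem_ofPred_eq, Subtype.forall, Prod.forall]
  constructor
  · rintro h I ⟨k, l, hkl, rfl⟩
    simpa only [liftSum_sub_liftSum x hkl] using h k l hkl
  · intro h k l hkl
    rw [liftSum_sub_liftSum x hkl]
    exact h _ ⟨k, l, hkl, rfl⟩

end Multimodular

/-- A nonempty set `P ⊆ ℝⁿ` is a multimodular polyhedron iff it is described by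
bounds `a_I ≤ x(I) ≤ b_I` over the consecutive subsets `I` of `N`, with
`a_I ∈ ℝ ∪ {-∞}` and `b_I ∈ ℝ ∪ {+∞}`. -/
theorem multimodular_polyhedron_description {n : ℕ} (P : Set (Fin n → ℝ))
    (hne : P.Nonempty) :
    IsMultimodularPoly P ↔
      ∃ (a : Finset (Fin n) → WithBot ℝ) (b : Finset (Fin n) → WithTop ℝ),
        P = {x : Fin n → ℝ | ∀ I : Finset (Fin n), IsConsecutive I →
          a I ≤ ((∑ i ∈ I, x i : ℝ) : WithBot ℝ) ∧
          ((∑ i ∈ I, x i : ℝ) : WithTop ℝ) ≤ b I} := by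
  constructor
  · intro hP
    obtain ⟨S, hS, rfl⟩ := isMultimodularPoly_iff.1 hP
    let sums (I : Finset (Fin n)) : Set ℝ := (fun x => ∑ i ∈ I, x i) '' {x | liftSum x ∈ S}
    have hsums (I : Finset (Fin n)) : (sums I).Nonempty := hne.image _
    refine ⟨fun I => sInf ((↑) '' sums I), fun I => sSup ((↑) '' sums I),
      Set.ext fun z => ⟨fun hz I _ => ?_, fun hz => ?_⟩⟩
    · exact ⟨csInf_le (OrderBot.bddBelow _) ⟨_, ⟨z, hz, rfl⟩, rfl⟩,
        le_csSup (OrderTop.bddAbove _) ⟨_, ⟨z, hz, rfl⟩, rfl⟩⟩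
    refine liftSum_mem_of_forall_sum_Icc hS (fun k l hkl r hr => ?_) (fun k l hkl r hr => ?_)
    · refine WithTop.coe_le_coe.1 <|
        (hz _ ⟨k, l, hkl, rfl⟩).2.trans (csSup_le ((hsums _).image _) ?_)
      rintro _ ⟨_, ⟨x, hx, rfl⟩, rfl⟩
      exact WithTop.coe_le_coe.2 (hr x hx)
    · refine WithBot.coe_le_coe.1 <|
        (le_csInf ((hsums _).image _) ?_).trans (hz _ ⟨k, l, hkl, rfl⟩).1
      rintro _ ⟨_, ⟨x, hx, rfl⟩, rfl⟩
      exact WithBot.coe_le_coe.2 (hr x hx)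
  · rintro ⟨a, b, rfl⟩
    obtain ⟨x, hx⟩ := hne
    refine isMultimodularPoly_iff.2 ⟨liftedBoundSet a b,
      isLConvexPoly_diffBoundedSet ⟨liftSum x, liftSum_mem_liftedBoundSet_iff.2 hx⟩, ?_⟩
    ext z
    exact liftSum_mem_liftedBoundSet_iff.symm
end
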